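/- A minimal extension sheaf E• on a fan Δ vanishes in all odd degrees: for every cone σ ∈ Δ and every odd integer q, E^q_σ = 0. -/

import Mathlib

open Module Function

set_option synthInstance.maxHeartbeats 1000000
set_option maxHeartbeats 1000000
set_option maxSynthPendingDepth 3

noncomputable section

/-! ## Cones and fans -/

/-- The convex cone generated by a finite set of vectors. -/
def coneGen {V : Type} [AddCommGroup V] [Module ℝ V] (s : Finset V) : Set V :=
  { x | ∃ c : V → ℝ, (∀ v ∈ s, 0 ≤ c v) ∧ x = ∑ v ∈ s, c v • v }

/-- A (strictly convex, i.e. pointed) polyhedral cone in a real vector space. -/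
structure Cone (V : Type) [AddCommGroup V] [Module ℝ V] where
  carrier : Set V
  isPoly : ∃ s : Finset V, carrier = coneGen s
  pointed : ∀ x ∈ carrier, -x ∈ carrier → x = 0

namespace Cone

variable {V : Type} [AddCommGroup V] [Module ℝ V]

/-- The linear span `V_σ` of a cone. -/
def spanC (σ : Cone V) : Submodule ℝ V := Submodule.span ℝ σ.carrier

/-- The dimension of a cone. -/
def dim (σ : Cone V) : ℕ := Module.finrank ℝ σ.spanC

/-- `τ` is a face of `σ` (cut out by a supporting linear form); `σ` is a face of itself. -/
def IsFaceOf (τ σ : Cone V) : Prop :=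
  ∃ f : V →ₗ[ℝ] ℝ, (∀ x ∈ σ.carrier, 0 ≤ f x) ∧
    τ.carrier = σ.carrier ∩ {x | f x = 0}

def IsProperFaceOf (τ σ : Cone V) : Prop := τ.IsFaceOf σ ∧ τ ≠ σ

/-- A cone is simplicial if it is generated by linearly independent vectors. -/
def IsSimplicial (σ : Cone V) : Prop :=
  ∃ s : Finset V, (LinearIndependent ℝ (fun v : s => (v : V))) ∧ σ.carrier = coneGen s

end Cone

/-- The zero cone `o`. -/
def zeroCone (V : Type) [AddCommGroup V] [Module ℝ V] : Cone V where
  carrier := {0}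
  isPoly := ⟨∅, by ext x; simp [coneGen]⟩
  pointed := by intro x hx _; simpa using hx

/-- A fan in `V`: a finite collection of pointed polyhedral cones, closed under taking
faces, such that the intersection of any two cones is a common face of both. -/
structure Fan (V : Type) [AddCommGroup V] [Module ℝ V] where
  cones : Set (Cone V)
  finite : cones.Finite
  zero_mem : zeroCone V ∈ cones
  face_mem : ∀ σ ∈ cones, ∀ τ : Cone V, τ.IsFaceOf σ → τ ∈ cones
  inter_mem : ∀ σ ∈ cones, ∀ σ' ∈ cones, ∃ τ ∈ cones,
    τ.IsFaceOf σ ∧ τ.IsFaceOf σ' ∧ τ.carrier = σ.carrier ∩ σ'.carrier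

namespace Fan

variable {V : Type} [AddCommGroup V] [Module ℝ V]

/-- A subfan of `Δ`: a subset of the cones closed under taking faces.  The subfans are
exactly the open subsets of the fan topology. -/
def IsSubfan (Δ : Fan V) (Λ : Set (Cone V)) : Prop :=
  Λ ⊆ Δ.cones ∧ ∀ σ ∈ Λ, ∀ τ : Cone V, τ.IsFaceOf σ → τ ∈ Λ

/-- The support `|Δ|` of a fan. -/
def support (Δ : Fan V) : Set V := ⋃ σ ∈ Δ.cones, σ.carrier

/-- A fan is complete if its support is the whole space. -/
def IsComplete (Δ : Fan V) : Prop := Δ.support = Set.univ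

/-- A fan is simplicial if all its cones are. -/
def IsSimplicial (Δ : Fan V) : Prop := ∀ σ ∈ Δ.cones, σ.IsSimplicial

/-- A fan is purely `n`-dimensional if every cone is a face of an `n`-dimensional cone. -/
def IsPurely (Δ : Fan V) (n : ℕ) : Prop :=
  ∀ σ ∈ Δ.cones, ∃ σ' ∈ Δ.cones, σ.IsFaceOf σ' ∧ σ'.dim = n

/-- The boundary subfan `∂Δ`: the cones supported in the topological boundary of `|Δ|`. -/
def boundary [TopologicalSpace V] (Δ : Fan V) : Set (Cone V) :=
  {τ ∈ Δ.cones | τ.carrier ⊆ frontier Δ.support}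

end Fan

/-! ## The graded algebra `A•` of polynomial functions (linear forms in degree 2) -/

/-- The algebra of polynomial functions on `V`, i.e. the subalgebra of `V → ℝ`
generated by the linear forms. -/
def polyAlg (V : Type) [AddCommGroup V] [Module ℝ V] : Subalgebra ℝ (V → ℝ) :=
  Algebra.adjoin ℝ {f : V → ℝ | IsLinearMap ℝ f}

/-- `A• = S•(V*)` as a commutative ring. -/
abbrev PolyRing (V : Type) [AddCommGroup V] [Module ℝ V] : Type := polyAlg V

variable (V : Type) [AddCommGroup V] [Module ℝ V]

/-- Polynomial functions homogeneous of (topological) degree `2k`. -/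
def AdegN (k : ℕ) : Submodule ℝ (PolyRing V) where
  carrier := {f | ∀ (t : ℝ) (x : V), (f : V → ℝ) (t • x) = t ^ k * (f : V → ℝ) x}
  add_mem' := by intro f g hf hg t x; simp [hf t x, hg t x]; ring
  zero_mem' := by intro t x; simp
  smul_mem' := by intro c f hf t x; simp [hf t x]; ring

/-- The degree-`q` part `A^q` of `A•`, with linear forms in degree `2`
(so `A^q = 0` for odd `q`). -/
def Adeg (q : ℤ) : Submodule ℝ (PolyRing V) :=
  ⨆ (k : ℕ) (_ : q = 2 * k), AdegN V k

/-- Evaluation of a polynomial function at a point, as a ring homomorphism. -/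
def evalRH (x : V) : PolyRing V →+* ℝ :=
  (Pi.evalRingHom (fun _ : V => ℝ) x).comp (polyAlg V).val.toRingHom

/-- The maximal graded ideal `m = A^{>0}` of polynomial functions vanishing at the origin. -/
def mId : Ideal (PolyRing V) := RingHom.ker (evalRH V 0)

/-- The ideal of polynomial functions vanishing on a subset `s ⊆ V`;
for `s = σ` a cone, `A•/I(σ) = A•_σ = S•(V_σ*)`. -/
def vanishingIdeal (s : Set V) : Ideal (PolyRing V) :=
  RingHom.ker (Pi.ringHom (fun x : s => evalRH V x.1))

/-- `A•_σ`, realized as the quotient of `A•` by the functions vanishing on `σ`. -/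
abbrev coneRing (σ : Cone V) : Type := PolyRing V ⧸ vanishingIdeal V σ.carrier

/-! ## Graded `A•`-modules -/

/-- A graded `A•`-module (with real structure): an `A•`-module with an internal
`ℤ`-grading by real subspaces, compatible with the grading of `A•`. -/
structure GAMod where
  M : Type
  [acg : AddCommGroup M]
  [modA : Module (PolyRing V) M]
  [modR : Module ℝ M]
  [tower : IsScalarTower ℝ (PolyRing V) M]
  deg : ℤ → Submodule ℝ M
  internal : DirectSum.IsInternal deg
  smul_deg : ∀ (p q : ℤ), ∀ a ∈ Adeg V p, ∀ x ∈ deg q, a • x ∈ deg (p + q)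

attribute [instance] GAMod.acg GAMod.modA GAMod.modR GAMod.tower

variable {V}

/-- A homomorphism of graded `A•`-modules, homogeneous of degree 0. -/
structure GHom (M N : GAMod V) where
  toLin : M.M →ₗ[PolyRing V] N.M
  deg_mem : ∀ q : ℤ, ∀ x ∈ M.deg q, toLin x ∈ N.deg q

def GHom.id (M : GAMod V) : GHom M M := ⟨LinearMap.id, fun _ _ h => h⟩

def GHom.comp {M N P : GAMod V} (g : GHom N P) (f : GHom M N) : GHom M P :=
  ⟨g.toLin ∘ₗ f.toLin, fun q x hx => g.deg_mem q _ (f.deg_mem q x hx)⟩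

variable (V)

/-- `M` is (the `A•`-module underlying) a free `A•_σ`-module. -/
def FreeOverCone (σ : Cone V) (M : Type) [AddCommGroup M] [Module (PolyRing V) M] : Prop :=
  ∃ h : Module.IsTorsionBySet (PolyRing V) M (vanishingIdeal V σ.carrier),
    letI := h.module
    Module.Free (coneRing V σ) M

/-! ## Reduction modulo the maximal graded ideal -/

/-- The submodule `m·M`. -/
def mSub (M : Type) [AddCommGroup M] [Module (PolyRing V) M] :
    Submodule (PolyRing V) M := (mId V) • (⊤ : Submodule (PolyRing V) M)

/-- The reduction `M̄ = M/mM`. -/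
abbrev mRed (M : Type) [AddCommGroup M] [Module (PolyRing V) M] : Type := M ⧸ mSub V M

lemma mSub_le_comap {M N : Type} [AddCommGroup M] [Module (PolyRing V) M]
    [AddCommGroup N] [Module (PolyRing V) N] (f : M →ₗ[PolyRing V] N) :
    mSub V M ≤ (mSub V N).comap f := by
  rw [mSub, Submodule.smul_le]
  intro r hr x _
  simp only [Submodule.mem_comap, map_smul]
  exact Submodule.smul_mem_smul hr trivial

/-- The reduced map `M̄ → N̄` induced by an `A•`-linear map. -/
def mRedMap {M N : Type} [AddCommGroup M] [Module (PolyRing V) M]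
    [AddCommGroup N] [Module (PolyRing V) N] (f : M →ₗ[PolyRing V] N) :
    mRed V M →ₗ[PolyRing V] mRed V N :=
  Submodule.mapQ _ _ f (mSub_le_comap V f)

/-- The image in `M̄` of an `ℝ`-subspace of `M` (e.g. of a graded piece). -/
def mRedPiece {M : Type} [AddCommGroup M] [Module (PolyRing V) M] [Module ℝ M]
    [IsScalarTower ℝ (PolyRing V) M] (p : Submodule ℝ M) : Submodule ℝ (mRed V M) :=
  p.map ((mSub V M).mkQ.restrictScalars ℝ)

/-! ## Sheaves of graded `A•`-modules on a fan -/

open scoped Classical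

/-- The zero cone as an element of a fan. -/
def Fan.ozero {V : Type} [AddCommGroup V] [Module ℝ V] (Δ : Fan V) : Δ.cones :=
  ⟨zeroCone V, Δ.zero_mem⟩


variable {V}

/-- A sheaf of graded `A•`-modules on the fan space `Δ`, given (as the fan topology
dictates) by its stalks on the cones together with compatible restriction maps. -/
structure FanSheaf (Δ : Fan V) where
  stalk : Δ.cones → GAMod V
  res : ∀ σ τ : Δ.cones, Cone.IsFaceOf τ.1 σ.1 → GHom (stalk σ) (stalk τ)
  res_self : ∀ (σ : Δ.cones) (h : Cone.IsFaceOf σ.1 σ.1), (res σ σ h).toLin = LinearMap.id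
  res_comp : ∀ (σ τ υ : Δ.cones) (h1 : Cone.IsFaceOf τ.1 σ.1) (h2 : Cone.IsFaceOf υ.1 τ.1)
      (h3 : Cone.IsFaceOf υ.1 σ.1),
      (res τ υ h2).toLin ∘ₗ (res σ τ h1).toLin = (res σ υ h3).toLin

namespace FanSheaf

variable {Δ : Fan V} (F : FanSheaf Δ)

/-- The sections of `F` over a collection `Λ` of cones of `Δ` (e.g. a subfan):
compatible families of elements of the stalks over `Λ`, extended by zero. -/
def secSub (Λ : Set (Cone V)) :
    Submodule (PolyRing V) (∀ σ : Δ.cones, (F.stalk σ).M) where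
  carrier := { s | (∀ σ : Δ.cones, σ.1 ∉ Λ → s σ = 0) ∧
    ∀ (σ τ : Δ.cones), σ.1 ∈ Λ → τ.1 ∈ Λ → ∀ h : Cone.IsFaceOf τ.1 σ.1,
      (F.res σ τ h).toLin (s σ) = s τ }
  add_mem' := by
    rintro a b ⟨ha0, ha⟩ ⟨hb0, hb⟩
    refine ⟨fun σ hσ => by simp [ha0 σ hσ, hb0 σ hσ], fun σ τ hσ hτ h => ?_⟩
    simp [map_add, ha σ τ hσ hτ h, hb σ τ hσ hτ h]
  zero_mem' := ⟨fun _ _ => rfl, fun σ τ _ _ h => by simp⟩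
  smul_mem' := by
    rintro c a ⟨ha0, ha⟩
    refine ⟨fun σ hσ => by simp [ha0 σ hσ], fun σ τ hσ hτ h => ?_⟩
    simp [map_smul, ha σ τ hσ hτ h]

/-- The `A•`-module of sections of `F` over `Λ`. -/
abbrev Sec (Λ : Set (Cone V)) : Type := F.secSub Λ

/-- The global sections `E•(Δ)`. -/
abbrev globalSec : Type := F.Sec Δ.cones

/-- The degree-`q` part of the module of sections. -/
def secDeg (Λ : Set (Cone V)) (q : ℤ) : Submodule ℝ (F.Sec Λ) where
  carrier := { s | ∀ σ : Δ.cones, s.1 σ ∈ (F.stalk σ).deg q }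
  add_mem' := by intro a b ha hb σ; exact add_mem (ha σ) (hb σ)
  zero_mem' := fun σ => zero_mem _
  smul_mem' := by intro c a ha σ; exact Submodule.smul_mem _ c (ha σ)

/-- Restriction of sections to a smaller collection of cones. -/
def resSec (Λ' Λ : Set (Cone V)) (hΛ : Λ ⊆ Λ') : F.Sec Λ' →ₗ[PolyRing V] F.Sec Λ where
  toFun s := ⟨fun σ => if σ.1 ∈ Λ then s.1 σ else 0, by
    classical
    refine ⟨fun σ hσ => by simp [hσ], fun σ τ hσ hτ h => ?_⟩
    simp only [hσ, hτ, if_pos]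
    exact s.2.2 σ τ (hΛ hσ) (hΛ hτ) h⟩
  map_add' a b := by
    apply Subtype.ext; funext σ; by_cases h : σ.1 ∈ Λ <;> simp [h]
  map_smul' c a := by
    apply Subtype.ext; funext σ; by_cases h : σ.1 ∈ Λ <;> simp [h]

/-- A sheaf is flabby if all restrictions from global sections to subfans are surjective. -/
def Flabby : Prop :=
  ∀ Λ : Set (Cone V), ∀ h : Δ.IsSubfan Λ, Function.Surjective (F.resSec Δ.cones Λ h.1)

/-- The boundary fan `∂σ` of a cone of `Δ`, as a set of cones. -/
def bdFan (σ : Δ.cones) : Set (Cone V) := {τ : Cone V | τ.IsProperFaceOf σ.1}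

/-- The restriction map `E•_σ → E•_{∂σ}` from the stalk to the sections over the
boundary fan of `σ`. -/
def bdRes (σ : Δ.cones) : (F.stalk σ).M →ₗ[PolyRing V] F.Sec (bdFan σ) where
  toFun x := ⟨fun τ => if h : Cone.IsProperFaceOf τ.1 σ.1 then (F.res σ τ h.1).toLin x else 0, by
    refine ⟨fun τ hτ => by simp [bdFan] at hτ; simp [hτ], ?_⟩
    intro τ υ hτ hυ h
    simp only [bdFan, Set.mem_setOf_eq] at hτ hυ
    simp only [dif_pos hτ, dif_pos hυ]
    rw [← F.res_comp σ τ υ hτ.1 h hυ.1]; rfl⟩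
  map_add' a b := by
    apply Subtype.ext; funext τ
    by_cases h : Cone.IsProperFaceOf τ.1 σ.1 <;> simp [h]
  map_smul' c a := by
    apply Subtype.ext; funext τ
    by_cases h : Cone.IsProperFaceOf τ.1 σ.1 <;> simp [h]

/-- The reduced restriction map `Ē•_σ → Ē•_{∂σ}` modulo `m`. -/
def bdResRed (σ : Δ.cones) :
    mRed V (F.stalk σ).M →ₗ[PolyRing V] mRed V (F.Sec (bdFan σ)) :=
  mRedMap V (F.bdRes σ)

/-- Condition (N): `E•_o ≅ A•_o = ℝ•`, i.e. the stalk at the zero cone is the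
trivial one-dimensional graded module concentrated in degree `0`. -/
def CondN : Prop :=
  Module.IsTorsionBySet (PolyRing V) (F.stalk Δ.ozero).M (mId V : Set (PolyRing V)) ∧
  Module.finrank ℝ (F.stalk Δ.ozero).M = 1 ∧
  ∀ q : ℤ, q ≠ 0 → (F.stalk Δ.ozero).deg q = ⊥

/-- Condition (PF): each stalk `E•_σ` is a free `A•_σ`-module. -/
def CondPF : Prop := ∀ σ : Δ.cones, FreeOverCone V σ.1 (F.stalk σ).M

/-- Condition (LME): for each nonzero cone `σ`, the restriction `E•_σ → E•_{∂σ}`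
induces, modulo `m`, an isomorphism of graded real vector spaces. -/
def CondLME : Prop :=
  ∀ σ : Δ.cones, σ.1 ≠ zeroCone V → ∀ q : ℤ,
    Set.BijOn (F.bdResRed σ)
      (mRedPiece V ((F.stalk σ).deg q) : Set (mRed V (F.stalk σ).M))
      (mRedPiece V (M := F.Sec (bdFan σ)) (F.secDeg (bdFan σ) q) : Set (mRed V (F.Sec (bdFan σ))))

/-- A minimal extension sheaf on the fan `Δ`. -/
def IsMES : Prop := F.CondN ∧ F.CondPF ∧ F.CondLME

end FanSheaf

/-! ### Auxiliary development for the proof -/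

section Aux

variable {V : Type} [AddCommGroup V] [Module ℝ V]

lemma adegN_mul {j l : ℕ} {a b : PolyRing V} (ha : a ∈ AdegN V j) (hb : b ∈ AdegN V l) :
    a * b ∈ AdegN V (j + l) := by
  intro t x
  have : ((a * b : PolyRing V) : V → ℝ) = (a : V → ℝ) * (b : V → ℝ) := rfl
  simp only [this, Pi.mul_apply, ha t x, hb t x]
  ring

lemma mem_iSup_adegN (f : PolyRing V) : f ∈ ⨆ k, AdegN V k := by
  obtain ⟨f, hf⟩ := f
  induction hf using Algebra.adjoin_induction with
  | mem g hg =>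
      refine Submodule.mem_iSup_of_mem 1 ?_
      intro t x
      rcases hg with ⟨hadd, hsmul⟩
      show g (t • x) = t ^ 1 * g x
      rw [hsmul t x, smul_eq_mul]; ring
  | algebraMap r =>
      refine Submodule.mem_iSup_of_mem 0 ?_
      intro t x
      show r = t ^ 0 * r
      ring
  | add x y hx hy ihx ihy => exact add_mem ihx ihy
  | mul x y hx hy ihx ihy =>
      refine Submodule.iSup_induction (motive := fun z => z * ⟨y, hy⟩ ∈ ⨆ k, AdegN V k) _ ihx ?_ ?_ ?_
      · intro j a haj
        refine Submodule.iSup_induction (motive := fun z => a * z ∈ ⨆ k, AdegN V k) _ ihy ?_ ?_ ?_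
        · intro l b hbl
          exact Submodule.mem_iSup_of_mem (j + l) (adegN_mul haj hbl)
        · simp
        · intro u v hu hv
          rw [mul_add]; exact add_mem hu hv
      · simp
      · intro u v hu hv
        rw [add_mul]; exact add_mem hu hv

/-- The span of homogeneous elements of degree at least `K`. -/
def highSup (V : Type) [AddCommGroup V] [Module ℝ V] (K : ℕ) : Submodule ℝ (PolyRing V) :=
  ⨆ k, ⨆ (_ : K ≤ k), AdegN V k

lemma adegN_le_highSup {K k : ℕ} (h : K ≤ k) : AdegN V k ≤ highSup V K :=
  le_iSup_of_le k (le_iSup_of_le h le_rfl)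

/-- Eliminator for membership in `highSup`. -/
lemma highSup_elim {K : ℕ} {a : PolyRing V} (h : a ∈ highSup V K) {P : PolyRing V → Prop}
    (h0 : P 0) (hadd : ∀ x y, P x → P y → P (x + y))
    (hbase : ∀ k, K ≤ k → ∀ x ∈ AdegN V k, P x) : P a := by
  refine Submodule.iSup_induction (motive := P) _ h ?_ h0 hadd
  intro j x hx
  by_cases hj : K ≤ j
  · rw [iSup_pos hj] at hx; exact hbase j hj x hx
  · rw [iSup_neg hj] at hx
    rw [Submodule.mem_bot] at hx
    rw [hx]; exact h0

lemma mem_mId_iff {f : PolyRing V} : f ∈ mId V ↔ (f : V → ℝ) 0 = 0 := Iff.rfl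

lemma highSup_vanish {K : ℕ} (hK : 1 ≤ K) {a : PolyRing V} (h : a ∈ highSup V K) :
    (a : V → ℝ) 0 = 0 := by
  refine highSup_elim h (P := fun a => (a : V → ℝ) 0 = 0) ?_ ?_ ?_
  · rfl
  · intro x y hx hy
    show (x : V → ℝ) 0 + (y : V → ℝ) 0 = 0
    rw [hx, hy, add_zero]
  · intro k hk x hx
    have := hx 0 0
    rw [zero_smul] at this
    rw [this, zero_pow (by omega), zero_mul]

lemma adegN_mem_mId {k : ℕ} (hk : 1 ≤ k) {a : PolyRing V} (ha : a ∈ AdegN V k) :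
    a ∈ mId V := by
  rw [mem_mId_iff]
  exact highSup_vanish hk (adegN_le_highSup le_rfl ha)

lemma mId_le_highSup_one {f : PolyRing V} (hf : f ∈ mId V) : f ∈ highSup V 1 := by
  have hsup : f ∈ AdegN V 0 ⊔ highSup V 1 := by
    have h1 : (⨆ k, AdegN V k) ≤ AdegN V 0 ⊔ highSup V 1 := by
      refine iSup_le fun k => ?_
      rcases Nat.eq_zero_or_pos k with rfl | hk
      · exact le_sup_left
      · exact le_trans (adegN_le_highSup hk) le_sup_right
    exact h1 (mem_iSup_adegN f)
  rw [Submodule.mem_sup] at hsup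
  obtain ⟨c, hc, p, hp, hf'⟩ := hsup
  have hc0 : (c : V → ℝ) 0 = 0 := by
    have hfe : (f : V → ℝ) 0 = 0 := hf
    have hpe : (p : V → ℝ) 0 = 0 := highSup_vanish le_rfl hp
    have : (f : V → ℝ) 0 = (c : V → ℝ) 0 + (p : V → ℝ) 0 := by rw [← hf']; rfl
    rw [hfe, hpe, add_zero] at this
    exact this.symm
  have hcz : c = 0 := by
    apply Subtype.ext
    funext x
    have := hc 0 x
    rw [zero_smul, pow_zero, one_mul] at this
    show (c : V → ℝ) x = 0
    rw [← this, hc0]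
  rw [← hf', hcz, zero_add]
  exact hp

lemma pow_mId_le_highSup (K : ℕ) : ∀ g ∈ (mId V) ^ K, g ∈ highSup V K := by
  induction K with
  | zero =>
      intro g _
      exact (iSup_le fun k => adegN_le_highSup (Nat.zero_le k)) (mem_iSup_adegN g)
  | succ K ih =>
      intro g hg
      rw [pow_succ] at hg
      refine Submodule.mul_induction_on hg ?_ ?_
      · intro a ha b hb
        have ha' : a ∈ highSup V K := ih a ha
        have hb' : b ∈ highSup V 1 := mId_le_highSup_one hb
        refine highSup_elim ha' (P := fun x => x * b ∈ highSup V (K + 1)) ?_ ?_ ?_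
        · simp
        · intro x y hx hy; rw [add_mul]; exact add_mem hx hy
        · intro k hk x hx
          refine highSup_elim hb' (P := fun z => x * z ∈ highSup V (K + 1)) ?_ ?_ ?_
          · simp
          · intro u v hu hv; rw [mul_add]; exact add_mem hu hv
          · intro l hl z hz
            exact adegN_le_highSup (by omega) (adegN_mul hx hz)
      · intro x y hx hy; exact add_mem hx hy

lemma adegN_le_adeg {k : ℕ} : AdegN V k ≤ Adeg V (2 * k) := by
  refine le_iSup_of_le k ?_
  exact le_iSup_of_le (by norm_num) le_rfl

end Aux
section Aux2

variable {V : Type} [AddCommGroup V] [Module ℝ V]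

open scoped DirectSum

namespace GAMod

/-- The decomposition equivalence coming from internality of the grading. -/
def emod (M : GAMod V) : (⨁ q : ℤ, M.deg q) ≃ₗ[ℝ] M.M :=
  LinearEquiv.ofBijective (DirectSum.coeLinearMap M.deg) M.internal

/-- Projection onto the degree-`q` component. -/
def proj (M : GAMod V) (q : ℤ) (m : M.M) : M.M := (M.emod.symm m q : M.M)

lemma proj_mem (M : GAMod V) (q : ℤ) (m : M.M) : M.proj q m ∈ M.deg q :=
  (M.emod.symm m q).2

lemma proj_add (M : GAMod V) (q : ℤ) (m m' : M.M) :
    M.proj q (m + m') = M.proj q m + M.proj q m' := by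
  simp only [proj, map_add, DirectSum.add_apply, Submodule.coe_add]

lemma proj_zero (M : GAMod V) (q : ℤ) : M.proj q 0 = 0 := by
  simp only [proj, map_zero, DirectSum.zero_apply, ZeroMemClass.coe_zero]

lemma proj_eq_of_mem (M : GAMod V) {p : ℤ} {x : M.M} (hx : x ∈ M.deg p) :
    M.proj p x = x := by
  simp only [proj, emod, M.internal.ofBijective_coeLinearMap_of_mem hx]

lemma proj_eq_zero_of_mem (M : GAMod V) {p q : ℤ} {x : M.M} (hx : x ∈ M.deg p)
    (hne : p ≠ q) : M.proj q x = 0 := by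
  simp only [proj, emod, M.internal.ofBijective_coeLinearMap_of_mem_ne hne hx,
    ZeroMemClass.coe_zero]

lemma proj_smul (M : GAMod V) {k : ℕ} {a : PolyRing V} (ha : a ∈ AdegN V k) (q : ℤ)
    (m : M.M) : M.proj q (a • m) = a • M.proj (q - 2 * k) m := by
  have htop : m ∈ ⨆ r, M.deg r := by
    rw [M.internal.submodule_iSup_eq_top]; trivial
  refine Submodule.iSup_induction
    (motive := fun m => M.proj q (a • m) = a • M.proj (q - 2 * k) m) _ htop ?_ ?_ ?_
  · intro r m hm
    have hsm : a • m ∈ M.deg (2 * k + r) := M.smul_deg (2 * k) r a (adegN_le_adeg ha) m hm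
    by_cases hq : (2 * k : ℤ) + r = q
    · have h1 : M.proj q (a • m) = a • m := M.proj_eq_of_mem (hq ▸ hsm)
      have hr : r = q - 2 * k := by omega
      have h2 : M.proj (q - 2 * k) m = m := M.proj_eq_of_mem (hr ▸ hm)
      rw [h1, h2]
    · have h1 : M.proj q (a • m) = 0 := M.proj_eq_zero_of_mem hsm hq
      have h2 : M.proj (q - 2 * k) m = 0 :=
        M.proj_eq_zero_of_mem hm (by omega)
      rw [h1, h2, smul_zero]
  · show M.proj q (a • (0 : M.M)) = a • M.proj (q - 2 * k) 0
    rw [smul_zero, M.proj_zero, M.proj_zero, smul_zero]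
  · intro u v hu hv
    rw [smul_add, M.proj_add, M.proj_add, hu, hv, smul_add]

end GAMod

/-- Key iteration: odd-degree homogeneous elements lie in `m^K · M` for every `K`. -/
lemma odd_mem_pow_smul (M : GAMod V)
    (H : ∀ r : ℤ, Odd r → ∀ y ∈ M.deg r, y ∈ mSub V M.M) :
    ∀ (K : ℕ) (q : ℤ), Odd q → ∀ x ∈ M.deg q,
      x ∈ (mId V) ^ K • (⊤ : Submodule (PolyRing V) M.M) := by
  intro K
  induction K with
  | zero =>
      intro q hq x hx
      rw [pow_zero, Ideal.one_eq_top, Submodule.top_smul]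
      trivial
  | succ K ih =>
      intro q hq x hx
      have hxm : x ∈ (mId V) • (⊤ : Submodule (PolyRing V) M.M) := H q hq x hx
      have key : M.proj q x ∈ (mId V) ^ (K + 1) • (⊤ : Submodule (PolyRing V) M.M) := by
        refine Submodule.smul_induction_on hxm ?_ ?_
        · intro r hr n _
          have hr1 : r ∈ highSup V 1 := mId_le_highSup_one hr
          refine highSup_elim hr1
            (P := fun r => M.proj q (r • n) ∈ (mId V) ^ (K + 1) •
              (⊤ : Submodule (PolyRing V) M.M)) ?_ ?_ ?_
          · show M.proj q ((0 : PolyRing V) • n) ∈ _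
            rw [zero_smul, M.proj_zero]; exact zero_mem _
          · intro u v hu hv
            rw [add_smul, M.proj_add]; exact add_mem hu hv
          · intro k hk a hak
            rw [M.proj_smul hak]
            have hodd : Odd (q - 2 * k) := hq.sub_even (even_two_mul _)
            have hyK := ih (q - 2 * (k : ℤ)) hodd _ (M.proj_mem (q - 2 * k) n)
            have hsm := Submodule.smul_mem_smul (adegN_mem_mId hk hak) hyK
            rwa [← Submodule.smul_assoc, Ideal.smul_eq_mul, ← pow_succ'] at hsm
        · intro u v hu hv
          rw [M.proj_add]; exact add_mem hu hv
      rwa [M.proj_eq_of_mem hx] at key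

end Aux2
section Aux3

variable {V : Type} [AddCommGroup V] [Module ℝ V]

lemma mem_vanishingIdeal_iff {s : Set V} {f : PolyRing V} :
    f ∈ vanishingIdeal V s ↔ ∀ x ∈ s, (f : V → ℝ) x = 0 := by
  rw [vanishingIdeal, RingHom.mem_ker]
  constructor
  · intro h x hx
    exact congrFun h ⟨x, hx⟩
  · intro h
    funext i
    exact h i.1 i.2

lemma exists_poly (f : PolyRing V) (x : V) :
    ∃ p : Polynomial ℝ, ∀ t : ℝ, (f : V → ℝ) (t • x) = p.eval t := by
  have hf := mem_iSup_adegN f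
  refine Submodule.iSup_induction
    (motive := fun f : PolyRing V => ∃ p : Polynomial ℝ, ∀ t : ℝ, (f : V → ℝ) (t • x) = p.eval t)
    _ hf ?_ ?_ ?_
  · intro k g hg
    refine ⟨Polynomial.C ((g : V → ℝ) x) * Polynomial.X ^ k, fun t => ?_⟩
    rw [hg t x, Polynomial.eval_mul, Polynomial.eval_C, Polynomial.eval_pow,
      Polynomial.eval_X, mul_comm]
  · exact ⟨0, fun t => by simp⟩
  · rintro u v ⟨p, hp⟩ ⟨q, hq⟩
    refine ⟨p + q, fun t => ?_⟩
    have : ((u + v : PolyRing V) : V → ℝ) (t • x) = (u : V → ℝ) (t • x) + (v : V → ℝ) (t • x) :=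
      rfl
    rw [this, hp t, hq t, Polynomial.eval_add]

lemma exists_poly_high {K : ℕ} {g : PolyRing V} (hg : g ∈ (mId V) ^ K) (x : V) :
    ∃ p : Polynomial ℝ, (∀ t : ℝ, (g : V → ℝ) (t • x) = p.eval t) ∧
      ∀ j < K, p.coeff j = 0 := by
  refine highSup_elim (pow_mId_le_highSup K g hg)
    (P := fun g => ∃ p : Polynomial ℝ, (∀ t : ℝ, (g : V → ℝ) (t • x) = p.eval t) ∧
      ∀ j < K, p.coeff j = 0) ?_ ?_ ?_
  · exact ⟨0, fun t => by simp, fun j _ => by simp⟩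
  · rintro u v ⟨p, hp, hpc⟩ ⟨q, hq, hqc⟩
    refine ⟨p + q, fun t => ?_, fun j hj => ?_⟩
    · have : ((u + v : PolyRing V) : V → ℝ) (t • x) = (u : V → ℝ) (t • x) + (v : V → ℝ) (t • x) :=
        rfl
      rw [this, hp t, hq t, Polynomial.eval_add]
    · rw [Polynomial.coeff_add, hpc j hj, hqc j hj, add_zero]
  · intro k hk g hgk
    refine ⟨Polynomial.C ((g : V → ℝ) x) * Polynomial.X ^ k, fun t => ?_, fun j hj => ?_⟩
    · rw [hgk t x, Polynomial.eval_mul, Polynomial.eval_C, Polynomial.eval_pow,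
        Polynomial.eval_X, mul_comm]
    · rw [Polynomial.coeff_C_mul, Polynomial.coeff_X_pow, if_neg (by omega), mul_zero]

lemma cone_smul_mem (σ : Cone V) : ∀ x ∈ σ.carrier, ∀ t : ℝ, 0 ≤ t → t • x ∈ σ.carrier := by
  intro x hx t ht
  obtain ⟨s, hs⟩ := σ.isPoly
  rw [hs] at hx ⊢
  obtain ⟨c, hc, rfl⟩ := hx
  refine ⟨fun v => t * c v, fun v hv => mul_nonneg ht (hc v hv), ?_⟩
  rw [Finset.smul_sum]
  exact Finset.sum_congr rfl fun v _ => (mul_smul t (c v) v).symm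

lemma vanishing_of_forall_pow {s : Set V} (hcone : ∀ x ∈ s, ∀ t : ℝ, 0 ≤ t → t • x ∈ s)
    (f : PolyRing V) (h : ∀ K : ℕ, ∃ g ∈ (mId V) ^ K, f - g ∈ vanishingIdeal V s) :
    f ∈ vanishingIdeal V s := by
  rw [mem_vanishingIdeal_iff]
  intro x hx
  obtain ⟨q, hq⟩ := exists_poly f x
  obtain ⟨g, hg, hfg⟩ := h (q.natDegree + 1)
  obtain ⟨p, hp, hpc⟩ := exists_poly_high hg x
  have heq : q = p := by
    have hroots : ∀ t : ℝ, 0 ≤ t → (q - p).eval t = 0 := by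
      intro t ht
      have hmem := hcone x hx t ht
      have hv := mem_vanishingIdeal_iff.mp hfg _ hmem
      have hsub : ((f - g : PolyRing V) : V → ℝ) (t • x)
          = (f : V → ℝ) (t • x) - (g : V → ℝ) (t • x) := rfl
      rw [hsub, hq t, hp t] at hv
      rw [Polynomial.eval_sub]
      linarith
    have hz : q - p = 0 := by
      apply Polynomial.eq_zero_of_infinite_isRoot
      apply Set.Infinite.mono _ (Set.Ici_infinite (0 : ℝ))
      intro t ht
      exact hroots t ht
    have := sub_eq_zero.mp hz
    exact this
  have hq0 : q = 0 := by
    ext j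
    rw [Polynomial.coeff_zero]
    by_cases hj : j < q.natDegree + 1
    · rw [heq]; exact hpc j hj
    · exact Polynomial.coeff_eq_zero_of_natDegree_lt (by omega)
  have h1 := hq 1
  rw [one_smul] at h1
  rw [h1, hq0, Polynomial.eval_zero]

lemma eq_zero_of_mem_all_pow (σ : Cone V) {M : Type} [AddCommGroup M]
    [Module (PolyRing V) M] (hfree : FreeOverCone V σ M) (x : M)
    (hx : ∀ K : ℕ, x ∈ (mId V) ^ K • (⊤ : Submodule (PolyRing V) M)) : x = 0 := by
  obtain ⟨h, hf⟩ := hfree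
  letI := h.module
  haveI := hf
  let π := Ideal.Quotient.mk (vanishingIdeal V σ.carrier)
  let b := Module.Free.chooseBasis (coneRing V σ) M
  have hcoord : ∀ (i) (K : ℕ), b.repr x i ∈ Ideal.map π ((mId V) ^ K) := by
    intro i K
    refine Submodule.smul_induction_on (hx K) ?_ ?_
    · intro r hr n _
      have hrn : r • n = π r • n := rfl
      rw [hrn, map_smul, Finsupp.smul_apply, smul_eq_mul]
      exact Ideal.mul_mem_right _ _ (Ideal.mem_map_of_mem π hr)
    · intro u v hu hv
      rw [map_add, Finsupp.add_apply]
      exact add_mem hu hv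
  have hzero : ∀ i, b.repr x i = 0 := by
    intro i
    obtain ⟨f, hf2⟩ := Ideal.Quotient.mk_surjective (b.repr x i)
    have hfv : f ∈ vanishingIdeal V σ.carrier := by
      apply vanishing_of_forall_pow (cone_smul_mem σ) f
      intro K
      obtain ⟨g, hg, hgc⟩ :=
        (Ideal.mem_map_iff_of_surjective π Ideal.Quotient.mk_surjective).mp (hcoord i K)
      refine ⟨g, hg, ?_⟩
      rw [← Ideal.Quotient.eq_zero_iff_mem]
      show π (f - g) = 0
      rw [map_sub, hf2, hgc, sub_self]
    have hπf : π f = 0 := Ideal.Quotient.eq_zero_iff_mem.mpr hfv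
    rw [← hf2]
    exact hπf
  have hrx : b.repr x = 0 := Finsupp.ext hzero
  exact b.repr.map_eq_zero_iff.mp hrx

end Aux3
section Aux4

variable {V : Type} [AddCommGroup V] [Module ℝ V]

lemma Cone.carrier_inj {σ τ : Cone V} (h : σ.carrier = τ.carrier) : σ = τ := by
  cases σ; cases τ; simp_all

lemma Cone.dim_lt_of_properFace [FiniteDimensional ℝ V] {τ σ : Cone V}
    (h : τ.IsProperFaceOf σ) : τ.dim < σ.dim := by
  obtain ⟨⟨f, hf, hcar⟩, hne⟩ := h
  have hsub : τ.carrier ⊆ σ.carrier := by rw [hcar]; exact Set.inter_subset_left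
  have hle : τ.spanC ≤ σ.spanC := Submodule.span_mono hsub
  have hne' : τ.spanC ≠ σ.spanC := by
    intro heq
    apply hne
    apply Cone.carrier_inj
    have hker : τ.carrier ⊆ (LinearMap.ker f : Set V) := by
      rw [hcar]; intro y hy; exact hy.2
    have hspan : τ.spanC ≤ LinearMap.ker f := Submodule.span_le.mpr hker
    have hσ0 : ∀ y ∈ σ.carrier, f y = 0 := by
      intro y hy
      have hy' : y ∈ σ.spanC := Submodule.subset_span hy
      rw [← heq] at hy'
      exact hspan hy'
    apply Set.Subset.antisymm hsub
    intro y hy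
    rw [hcar]
    exact ⟨hy, hσ0 y hy⟩
  exact Submodule.finrank_lt_finrank_of_lt (lt_of_le_of_ne hle hne')

end Aux4
/-- A minimal extension sheaf on a fan vanishes in all odd degrees. -/
theorem mes_vanishes_in_odd_degrees
    {V : Type} [AddCommGroup V] [Module ℝ V] [FiniteDimensional ℝ V]
    {Δ : Fan V} (F : FanSheaf Δ) (hF : F.IsMES) :
    ∀ σ : Δ.cones, ∀ q : ℤ, Odd q → (F.stalk σ).deg q = ⊥ := by
  obtain ⟨hN, hPF, hLME⟩ := hF
  suffices main : ∀ n : ℕ, ∀ σ : Δ.cones, σ.1.dim = n → ∀ q : ℤ, Odd q →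
      (F.stalk σ).deg q = ⊥ by
    intro σ q hq
    exact main σ.1.dim σ rfl q hq
  intro n
  induction n using Nat.strong_induction_on with
  | _ n ih =>
    intro σ hdim q hq
    by_cases hz : σ.1 = zeroCone V
    · have hσ : σ = Δ.ozero := Subtype.ext hz
      subst hσ
      exact hN.2.2 q (by rcases hq with ⟨m, hm⟩; omega)
    · have hodd_sub : ∀ r : ℤ, Odd r → ∀ y ∈ (F.stalk σ).deg r,
          y ∈ mSub V (F.stalk σ).M := by
        intro r hr y hy
        have hsec : F.secDeg (FanSheaf.bdFan σ) r = ⊥ := by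
          rw [eq_bot_iff]
          intro s hs
          rw [Submodule.mem_bot]
          apply Subtype.ext
          funext τ
          show s.1 τ = 0
          by_cases hτ : τ.1 ∈ FanSheaf.bdFan σ
          · have hτ' : Cone.IsProperFaceOf τ.1 σ.1 := hτ
            have hlt : τ.1.dim < n := hdim ▸ Cone.dim_lt_of_properFace hτ'
            have hbot := ih τ.1.dim hlt τ rfl r hr
            have hmem := hs τ
            rw [hbot, Submodule.mem_bot] at hmem
            exact hmem
          · exact s.2.1 τ hτ
        have hLb := hLME σ hz r
        rw [hsec] at hLb
        simp only [mRedPiece, Submodule.map_bot] at hLb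
        have hy1 : ((mSub V (F.stalk σ).M).mkQ.restrictScalars ℝ) y ∈
            mRedPiece V ((F.stalk σ).deg r) := Submodule.mem_map_of_mem hy
        have h01 : (0 : mRed V (F.stalk σ).M) ∈ mRedPiece V ((F.stalk σ).deg r) := zero_mem _
        have hmapsto := hLb.1 hy1
        rw [SetLike.mem_coe, Submodule.mem_bot] at hmapsto
        have h0map : F.bdResRed σ 0 = 0 := map_zero _
        have heq0 := hLb.2.1 hy1 h01 (by rw [hmapsto, h0map])
        have : Submodule.Quotient.mk y = (0 : mRed V (F.stalk σ).M) := heq0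
        exact (Submodule.Quotient.mk_eq_zero _).mp this
      rw [eq_bot_iff]
      intro x hx
      rw [Submodule.mem_bot]
      exact eq_zero_of_mem_all_pow σ.1 (hPF σ) x
        (fun K => odd_mem_pow_smul (F.stalk σ) hodd_sub K q hq x hx)

end
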